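/- arXiv:2412.12041 — 5 statements merged into one kernel-verified Lean document; each statement's English description precedes it below -/
import Mathlib

section
/- Every natural function f : ℕ+ → ℕ+ is either constant or strictly increasing. -/
/-- A function `f : ℕ+ → ℕ+` is a natural function if it belongs to the smallest set of
functions containing the identity and all constant functions, and closed under pointwise
addition, multiplication and exponentiation. -/
inductive IsNaturalFunction : (ℕ+ → ℕ+) → Prop
  | id : IsNaturalFunction (fun n => n)
  | const (a : ℕ+) : IsNaturalFunction (fun _ => a)
  | add {g h : ℕ+ → ℕ+} : IsNaturalFunction g → IsNaturalFunction h →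
      IsNaturalFunction (fun n => g n + h n)
  | mul {g h : ℕ+ → ℕ+} : IsNaturalFunction g → IsNaturalFunction h →
      IsNaturalFunction (fun n => g n * h n)
  | pow {g h : ℕ+ → ℕ+} : IsNaturalFunction g → IsNaturalFunction h →
      IsNaturalFunction (fun n => g n ^ (h n : ℕ))

private lemma natfun_mono {g : ℕ+ → ℕ+}
    (hg : (∃ c : ℕ+, ∀ n : ℕ+, g n = c) ∨ StrictMono g) : Monotone g := by
  rcases hg with ⟨c, hc⟩ | hg
  · intro a b _; rw [hc a, hc b]
  · exact hg.monotone

theorem natural_function_constant_or_strictMono (f : ℕ+ → ℕ+) (hf : IsNaturalFunction f) :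
    (∃ c : ℕ+, ∀ n : ℕ+, f n = c) ∨ StrictMono f := by
  induction hf with
  | id => exact Or.inr fun a b h => h
  | const a => exact Or.inl ⟨a, fun _ => rfl⟩
  | @add g h _ _ ihg ihh =>
    rcases ihg with ⟨c, hc⟩ | hg
    · rcases ihh with ⟨d, hd⟩ | hh
      · exact Or.inl ⟨c + d, fun n => by show g n + h n = c + d; rw [hc, hd]⟩
      · refine Or.inr fun a b hab => ?_
        simp only
        exact add_lt_add_of_le_of_lt (natfun_mono (Or.inl ⟨c, hc⟩) hab.le) (hh hab)
    · refine Or.inr fun a b hab => ?_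
      simp only
      exact add_lt_add_of_lt_of_le (hg hab) (natfun_mono ihh hab.le)
  | @mul g h _ _ ihg ihh =>
    rcases ihg with ⟨c, hc⟩ | hg
    · rcases ihh with ⟨d, hd⟩ | hh
      · exact Or.inl ⟨c * d, fun n => by show g n * h n = c * d; rw [hc, hd]⟩
      · refine Or.inr fun a b hab => ?_
        simp only [← PNat.coe_lt_coe, PNat.mul_coe]
        exact Nat.mul_lt_mul_of_le_of_lt
          (PNat.coe_le_coe _ _ |>.2 (natfun_mono (Or.inl ⟨c, hc⟩) hab.le))
          (PNat.coe_lt_coe _ _ |>.2 (hh hab)) (g b).pos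
    · refine Or.inr fun a b hab => ?_
      simp only [← PNat.coe_lt_coe, PNat.mul_coe]
      exact Nat.mul_lt_mul_of_lt_of_le (PNat.coe_lt_coe _ _ |>.2 (hg hab))
        (PNat.coe_le_coe _ _ |>.2 (natfun_mono ihh hab.le)) (h b).pos
  | @pow g h _ _ ihg ihh =>
    rcases ihg with ⟨c, hc⟩ | hg
    · rcases ihh with ⟨d, hd⟩ | hh
      · exact Or.inl ⟨c ^ (d : ℕ), fun n => by show g n ^ (h n : ℕ) = c ^ (d : ℕ); rw [hc, hd]⟩
      · rcases eq_or_lt_of_le c.one_le with hc1 | hc1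
        · refine Or.inl ⟨1, fun n => ?_⟩
          simp only [hc, ← hc1, one_pow]
        · refine Or.inr fun a b hab => ?_
          simp only [hc, ← PNat.coe_lt_coe, PNat.pow_coe]
          exact Nat.pow_lt_pow_right (by exact_mod_cast hc1)
            (PNat.coe_lt_coe _ _ |>.2 (hh hab))
    · refine Or.inr fun a b hab => ?_
      simp only [← PNat.coe_lt_coe, PNat.pow_coe]
      calc ((g a : ℕ)) ^ (h a : ℕ) < (g b : ℕ) ^ (h a : ℕ) :=
            Nat.pow_lt_pow_left (PNat.coe_lt_coe _ _ |>.2 (hg hab)) (h a).pos.ne'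
        _ ≤ (g b : ℕ) ^ (h b : ℕ) :=
            Nat.pow_le_pow_right (g b).pos
              (PNat.coe_le_coe _ _ |>.2 (natfun_mono ihh hab.le))
end

section
/- Let f : ℕ+ → ℕ+ be a non-constant function given by a polynomial with natural number coefficients (i.e., there is a polynomial P ∈ ℕ[X] with f(n) = P(n) for all n ∈ ℕ+, and f is not constant). Then the image f(ℕ+) is not contained in the set of prime numbers; that is, there exists n ∈ ℕ+ such that f(n) is not prime. -/
theorem polynomial_image_not_subset_primes (f : ℕ+ → ℕ+) (P : Polynomial ℕ)
    (hP : ∀ n : ℕ+, (f n : ℕ) = P.eval (n : ℕ))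
    (hnc : ¬ ∃ c : ℕ+, ∀ n : ℕ+, f n = c) :
    ∃ n : ℕ+, ¬ Nat.Prime (f n : ℕ) := by
  by_contra h
  push_neg at h
  set p : ℕ := (f 1 : ℕ) with hpdef
  have hp : Nat.Prime p := h 1
  have hp1 : P.eval 1 = p := (hP 1).symm
  set Q : Polynomial ℤ := P.map (Nat.castRingHom ℤ) with hQdef
  have hQ : ∀ n : ℕ, Q.eval (n : ℤ) = ((P.eval n : ℕ) : ℤ) := by
    intro n
    rw [hQdef, Polynomial.eval_map, Polynomial.eval₂_at_natCast]
    simp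
  -- for each k, P.eval (1 + k*p) = p
  have key : ∀ k : ℕ, P.eval (1 + k * p) = p := by
    intro k
    have hdvdZ : ((1 + k * p : ℕ) : ℤ) - ((1:ℕ) : ℤ) ∣
        Q.eval ((1 + k * p : ℕ) : ℤ) - Q.eval ((1:ℕ) : ℤ) :=
      Polynomial.sub_dvd_eval_sub _ _ _
    rw [hQ, hQ, hp1] at hdvdZ
    have hpZ : (p : ℤ) ∣ ((P.eval (1 + k * p) : ℕ) : ℤ) - (p : ℤ) :=
      dvd_trans ⟨k, by push_cast; ring⟩ hdvdZ
    have hpdvd : (p : ℤ) ∣ ((P.eval (1 + k * p) : ℕ) : ℤ) := by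
      have := dvd_add hpZ (dvd_refl (p : ℤ)); simpa using this
    have hpn : p ∣ P.eval (1 + k * p) := by exact_mod_cast hpdvd
    have hppos : 0 < p := hp.pos
    set n : ℕ+ := ⟨1 + k * p, by omega⟩ with hn
    have hval : (f n : ℕ) = P.eval (1 + k * p) := hP n
    have hprime : Nat.Prime (P.eval (1 + k * p)) := hval ▸ h n
    exact ((Nat.prime_dvd_prime_iff_eq hp hprime).mp hpn).symm
  -- Q - C p has infinitely many roots
  have hroots : Set.Infinite {x : ℤ | (Q - Polynomial.C (p : ℤ)).IsRoot x} := by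
    apply Set.infinite_of_injective_forall_mem (f := fun k : ℕ => ((1 + k * p : ℕ) : ℤ))
    · intro a b hab
      simp only at hab
      have h2 : (1 + a * p : ℕ) = 1 + b * p := by exact_mod_cast hab
      have h3 : a * p = b * p := by omega
      exact Nat.eq_of_mul_eq_mul_right hp.pos h3
    · intro k
      simp only [Set.mem_setOf_eq, Polynomial.IsRoot, Polynomial.eval_sub, Polynomial.eval_C]
      rw [hQ, key k]
      ring
  have hQeq : Q - Polynomial.C (p : ℤ) = 0 := Polynomial.eq_zero_of_infinite_isRoot _ hroots
  have hQC : Q = Polynomial.C (p : ℤ) := by linear_combination hQeq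
  have hconst : ∀ n : ℕ+, f n = f 1 := by
    intro n
    have : (f n : ℕ) = p := by
      have := hQ (n : ℕ)
      rw [hQC] at this
      simp at this
      have : P.eval (n : ℕ) = p := by exact_mod_cast this.symm
      rw [hP n, this]
    exact PNat.coe_injective (by rw [this, hpdef])
  exact hnc ⟨f 1, hconst⟩
end

section
/- Let a ≥ 2 be an integer and b ≥ 0 a natural number, and let f : ℕ+ → ℕ+ be defined by f(n) = a^n + b. Then there exists n ∈ ℕ+ such that f(n) is not prime. -/
theorem exp_plus_const_not_all_prime (a b : ℕ) (ha : 2 ≤ a) (f : ℕ+ → ℕ+)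
    (hf : ∀ n : ℕ+, (f n : ℕ) = a ^ (n : ℕ) + b) :
    ∃ n : ℕ+, ¬ Nat.Prime (f n : ℕ) := by
  by_cases hp : Nat.Prime (a + b)
  · set p := a + b with hpdef
    refine ⟨⟨p, hp.pos⟩, ?_⟩
    have hfn : (f ⟨p, hp.pos⟩ : ℕ) = a ^ p + b := by
      exact hf _
    rw [hfn]
    -- p ∣ a^p + b
    have hdvd : p ∣ a ^ p + b := by
      haveI : Fact (Nat.Prime p) := ⟨hp⟩
      have : ((a ^ p + b : ℕ) : ZMod p) = 0 := by
        push_cast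
        rw [ZMod.pow_card]
        have h0 : ((p : ℕ) : ZMod p) = 0 := ZMod.natCast_self p
        rw [show ((a:ZMod p) + b = ((a+b : ℕ) : ZMod p)) by push_cast; ring, ← hpdef, h0]
      exact (ZMod.natCast_eq_zero_iff _ _).mp this
    have hlt : p < a ^ p + b := by
      have : a < a ^ p := by
        calc a = a ^ 1 := (pow_one a).symm
        _ < a ^ p := Nat.pow_lt_pow_right (by omega) hp.one_lt
      omega
    intro hprime
    rcases (hprime.eq_one_or_self_of_dvd p hdvd) with h | h
    · exact hp.one_lt.ne' h
    · omega
  · refine ⟨1, ?_⟩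
    have : (f 1 : ℕ) = a + b := by rw [hf]; simp
    rw [this]; exact hp
end

section
/- Assume that for every non-constant natural function g : ℕ+ → ℕ+ there exists n ∈ ℕ+ with g(n) not prime. Then for every non-constant natural function f : ℕ+ → ℕ+, the set {n ∈ ℕ+ : f(n) is not prime} is infinite (equivalently, the set of elements of the image f(ℕ+) that are not prime is infinite). -/
theorem IsNaturalFunction.shift {f : ℕ+ → ℕ+} (hf : IsNaturalFunction f) (k : ℕ+) :
    IsNaturalFunction (fun n => f (n + k)) := by
  induction hf with
  | id => exact .add .id (.const k)
  | const a => exact .const a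
  | add hg hh ihg ihh => exact .add ihg ihh
  | mul hg hh ihg ihh => exact .mul ihg ihh
  | pow hg hh ihg ihh => exact .pow ihg ihh

theorem IsNaturalFunction.const_or_strictMono {f : ℕ+ → ℕ+} (hf : IsNaturalFunction f) :
    (∃ c : ℕ+, ∀ n : ℕ+, f n = c) ∨ StrictMono f := by
  induction hf with
  | id => exact Or.inr strictMono_id
  | const a => exact Or.inl ⟨a, fun _ => rfl⟩
  | @add g h hg hh ihg ihh =>
    rcases ihg with ⟨c, hc⟩ | hg'
    · rcases ihh with ⟨d, hd⟩ | hh'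
      · exact Or.inl ⟨c + d, fun n => by show g n + h n = _; rw [hc, hd]⟩
      · exact Or.inr fun a b hab => by
          show g a + h a < g b + h b
          rw [hc, hc]; exact add_lt_add_right (hh' hab) c
    · refine Or.inr fun a b hab => ?_
      show g a + h a < g b + h b
      rcases ihh with ⟨d, hd⟩ | hh'
      · rw [hd a, hd b]; exact add_lt_add_left (hg' hab) d
      · exact add_lt_add (hg' hab) (hh' hab)
  | @mul g h hg hh ihg ihh =>
    have key : ∀ (u v : ℕ+ → ℕ+) (a b : ℕ+), u a < u b → v a ≤ v b →
        u a * v a < u b * v b := by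
      intro u v a b h1 h2
      rw [← PNat.coe_lt_coe] at h1 ⊢
      rw [← PNat.coe_le_coe] at h2
      push_cast
      exact Nat.mul_lt_mul_of_lt_of_le h1 h2 (v b).pos
    rcases ihg with ⟨c, hc⟩ | hg'
    · rcases ihh with ⟨d, hd⟩ | hh'
      · exact Or.inl ⟨c * d, fun n => by show g n * h n = _; rw [hc, hd]⟩
      · refine Or.inr fun a b hab => ?_
        show g a * h a < g b * h b
        rw [mul_comm (g a), mul_comm (g b)]
        exact key h g a b (hh' hab) (le_of_eq (by rw [hc, hc]))
    · refine Or.inr fun a b hab => ?_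
      show g a * h a < g b * h b
      rcases ihh with ⟨d, hd⟩ | hh'
      · exact key g h a b (hg' hab) (le_of_eq (by rw [hd, hd]))
      · exact key g h a b (hg' hab) (hh' hab).le
  | @pow g h hg hh ihg ihh =>
    rcases ihg with ⟨c, hc⟩ | hg'
    · rcases ihh with ⟨d, hd⟩ | hh'
      · exact Or.inl ⟨c ^ (d : ℕ), fun n => by show g n ^ (h n : ℕ) = _; rw [hc, hd]⟩
      · rcases eq_or_lt_of_le c.one_le with h1 | h1
        · refine Or.inl ⟨1, fun n => ?_⟩
          show g n ^ (h n : ℕ) = 1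
          rw [hc, ← h1, one_pow]
        · refine Or.inr fun a b hab => ?_
          show g a ^ (h a : ℕ) < g b ^ (h b : ℕ)
          rw [← PNat.coe_lt_coe]
          push_cast
          rw [hc, hc]
          exact Nat.pow_lt_pow_right (by exact_mod_cast h1) (by
            exact_mod_cast hh' hab)
    · refine Or.inr fun a b hab => ?_
      show g a ^ (h a : ℕ) < g b ^ (h b : ℕ)
      have h2 : h a ≤ h b := by
        rcases ihh with ⟨d, hd⟩ | hh'
        · rw [hd, hd]
        · exact (hh' hab).le
      rw [← PNat.coe_lt_coe]
      push_cast
      calc (g a : ℕ) ^ (h a : ℕ) < (g b : ℕ) ^ (h a : ℕ) :=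
            Nat.pow_lt_pow_left (by exact_mod_cast hg' hab) (h a).pos.ne'
        _ ≤ (g b : ℕ) ^ (h b : ℕ) :=
            Nat.pow_le_pow_right (g b).pos (by exact_mod_cast h2)

theorem infinitely_many_nonprime_values
    (H : ∀ g : ℕ+ → ℕ+, IsNaturalFunction g → ¬ (∃ c : ℕ+, ∀ n : ℕ+, g n = c) →
      ∃ n : ℕ+, ¬ Nat.Prime (g n : ℕ))
    (f : ℕ+ → ℕ+) (hf : IsNaturalFunction f) (hnc : ¬ ∃ c : ℕ+, ∀ n : ℕ+, f n = c) :
    {n : ℕ+ | ¬ Nat.Prime (f n : ℕ)}.Infinite := by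
  have hmono : StrictMono f := (hf.const_or_strictMono).resolve_left hnc
  by_contra hfin
  have hfin' : {n : ℕ+ | ¬ Nat.Prime (f n : ℕ)}.Finite := Set.not_infinite.mp hfin
  obtain ⟨N, hN⟩ : ∃ N : ℕ+, ∀ n ∈ {n : ℕ+ | ¬ Nat.Prime (f n : ℕ)}, n ≤ N := by
    obtain ⟨N, hN⟩ := hfin'.bddAbove
    refine ⟨N + 1, fun n hn => le_trans (hN hn) ?_⟩
    rw [← PNat.coe_le_coe]; push_cast; omega
  have hg : IsNaturalFunction (fun n => f (n + N)) := hf.shift N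
  have hgnc : ¬ ∃ c : ℕ+, ∀ n : ℕ+, f (n + N) = c := by
    rintro ⟨c, hc⟩
    have h12 : f (1 + N) < f (2 + N) := hmono (by
      rw [← PNat.coe_lt_coe]; push_cast; omega)
    rw [hc, hc] at h12
    exact lt_irrefl c h12
  obtain ⟨m, hm⟩ := H _ hg hgnc
  have : m + N ≤ N := hN (m + N) hm
  rw [← PNat.coe_le_coe] at this; push_cast at this
  have := m.pos; omega
end

section
/- Assume that for every non-constant natural function g : ℕ+ → ℕ+ there exists n ∈ ℕ+ with g(n) not prime. Then there are infinitely many composite Fermat numbers; that is, the set {n ∈ ℕ+ : 2^(2^n) + 1 is not prime} is infinite. -/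
theorem infinitely_many_composite_fermat
    (H : ∀ g : ℕ+ → ℕ+, IsNaturalFunction g → ¬ (∃ c : ℕ+, ∀ n : ℕ+, g n = c) →
      ∃ n : ℕ+, ¬ Nat.Prime (g n : ℕ)) :
    {n : ℕ+ | ¬ Nat.Prime (2 ^ (2 ^ (n : ℕ)) + 1)}.Infinite := by
  by_contra hfin
  rw [Set.not_infinite] at hfin
  obtain ⟨N, hN⟩ := hfin.bddAbove
  set c : ℕ+ := N + 1 with hc
  set F : ℕ+ → ℕ+ := fun n => (2 : ℕ+) ^ ((((2 : ℕ+) ^ ((n + c : ℕ+) : ℕ)) : ℕ+) : ℕ) + 1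
    with hF
  have hnat : IsNaturalFunction F :=
    IsNaturalFunction.add
      (IsNaturalFunction.pow (IsNaturalFunction.const 2)
        (IsNaturalFunction.pow (IsNaturalFunction.const 2)
          (IsNaturalFunction.add IsNaturalFunction.id (IsNaturalFunction.const c))))
      (IsNaturalFunction.const 1)
  have hcast : ∀ n : ℕ+, (F n : ℕ) = 2 ^ (2 ^ ((n : ℕ) + (c : ℕ))) + 1 := by
    intro n
    simp [hF]
  have hnc : ¬ (∃ d : ℕ+, ∀ n : ℕ+, F n = d) := by
    rintro ⟨d, hd⟩
    have h12 : (F 1 : ℕ) = (F 2 : ℕ) := by rw [hd 1, hd 2]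
    rw [hcast 1, hcast 2] at h12
    have : (2:ℕ) ^ (2 ^ (1 + (c:ℕ))) < 2 ^ (2 ^ (2 + (c:ℕ))) := by
      apply Nat.pow_lt_pow_right one_lt_two
      apply Nat.pow_lt_pow_right one_lt_two
      omega
    simp only [PNat.one_coe, PNat.val_ofNat] at h12
    omega
  obtain ⟨n, hn⟩ := H F hnat hnc
  rw [hcast n] at hn
  have hmem : (n + c) ∈ {n : ℕ+ | ¬ Nat.Prime (2 ^ (2 ^ (n : ℕ)) + 1)} := by
    simpa using hn
  have := hN hmem
  have h1 : (N : ℕ) + 1 ≤ (c : ℕ) := by rw [hc]; simp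
  have h2 : ((n + c : ℕ+) : ℕ) ≤ (N : ℕ) := by exact_mod_cast this
  have h3 : ((n : ℕ)) + (c : ℕ) ≤ (N : ℕ) := by simpa using h2
  have := n.pos
  omega
end
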